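/- arXiv:2207.00832 — 4 statements merged into one kernel-verified Lean document; each statement's English description precedes it below -/
import Mathlib

section
/- For each error ball B ∈ {B^SD, B^SI}, there exist real constants c1, c2 and an even integer n0 such that for every even n ≥ n0 and each N ∈ {1,2}, (3/2)·log2 n + c1 ≤ ρ_b(n,N;B) ≤ (3/2)·log2 n + c2. -/
namespace BRC

/-- Hamming distance between two binary words (of the same length). -/
def hammingDist (x y : List Bool) : ℕ :=
  (List.zip x y).countP (fun p => p.1 != p.2)

/-- `balanced n` is the set `U_n` of binary words of length `n` with exactly `n/2` ones. -/
def balanced (n : ℕ) : Set (List Bool) :=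
  {x | x.length = n ∧ x.count true = n / 2}

/-- `B^S(x)`: words obtained from `x` by at most one substitution. -/
def BS (x : List Bool) : Set (List Bool) :=
  {y | y.length = x.length ∧ hammingDist x y ≤ 1}

/-- `B^D(x)`: words obtained from `x` by deleting one symbol. -/
def BD (x : List Bool) : Set (List Bool) :=
  {y | ∃ (u v : List Bool) (b : Bool), x = u ++ b :: v ∧ y = u ++ v}

/-- `B^I(x)`: words obtained from `x` by inserting one symbol. -/
def BI (x : List Bool) : Set (List Bool) :=
  {y | ∃ (u v : List Bool) (b : Bool), x = u ++ v ∧ y = u ++ b :: v}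

def BDI (x : List Bool) : Set (List Bool) := BD x ∪ BI x
def BSD (x : List Bool) : Set (List Bool) := BS x ∪ BD x
def BSI (x : List Bool) : Set (List Bool) := BS x ∪ BI x
def Bedit (x : List Bool) : Set (List Bool) := BS x ∪ BD x ∪ BI x

/-- `C` is a balanced `(n,N;B)`-reconstruction code: `C ⊆ U_n` and `ν(C;B) < N`. -/
def reconCode (n N : ℕ) (B : List Bool → Set (List Bool)) (C : Set (List Bool)) : Prop :=
  C ⊆ balanced n ∧ ∀ x ∈ C, ∀ y ∈ C, x ≠ y → (B x ∩ B y).ncard < N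

/-- `ρ_b(n,N;B)`: optimal redundancy of a balanced `(n,N;B)`-reconstruction code. -/
noncomputable def rho (n N : ℕ) (B : List Bool → Set (List Bool)) : ℝ :=
  sInf {r : ℝ | ∃ C : Set (List Bool),
    reconCode n N B C ∧ r = (n : ℝ) - Real.logb 2 (C.ncard : ℝ)}

/-- `(10)^m`. -/
def pat10 (m : ℕ) : List Bool := (List.replicate m [true, false]).flatten
/-- `(01)^m`. -/
def pat01 (m : ℕ) : List Bool := (List.replicate m [false, true]).flatten

/-- Type-A-confusable with parameter `m`: `{c, c'} = {(10)^m, (01)^m}`. -/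
def TypeAWith (m : ℕ) (x y : List Bool) : Prop :=
  ∃ u v : List Bool,
    (x = u ++ pat10 m ++ v ∧ y = u ++ pat01 m ++ v) ∨
    (x = u ++ pat01 m ++ v ∧ y = u ++ pat10 m ++ v)

/-- Type-A-confusable (with some `m ≥ 1`). -/
def TypeA (x y : List Bool) : Prop := ∃ m, 1 ≤ m ∧ TypeAWith m x y

/-- Type-B-confusable with parameter `m`:
`{c, c'} = {0 1^m, 1^m 0}` or `{c, c'} = {1 0^m, 0^m 1}`. -/
def TypeBWith (m : ℕ) (x y : List Bool) : Prop :=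
  ∃ u v : List Bool,
    ((x = u ++ (false :: List.replicate m true) ++ v ∧
        y = u ++ (List.replicate m true ++ [false]) ++ v) ∨
     (x = u ++ (List.replicate m true ++ [false]) ++ v ∧
        y = u ++ (false :: List.replicate m true) ++ v)) ∨
    ((x = u ++ (true :: List.replicate m false) ++ v ∧
        y = u ++ (List.replicate m false ++ [true]) ++ v) ∨
     (x = u ++ (List.replicate m false ++ [true]) ++ v ∧
        y = u ++ (true :: List.replicate m false) ++ v))

/-- Type-B-confusable (with some `m ≥ 2`). -/
def TypeB (x y : List Bool) : Prop := ∃ m, 2 ≤ m ∧ TypeBWith m x y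

/-- Number of runs of a binary word. -/
def numRuns (x : List Bool) : ℕ := (x.destutter (· ≠ ·)).length

/-- `V_{n-1}`: binary words of length `n-1` with Hamming weight `n/2` or `n/2 - 1`. -/
def Vset (n : ℕ) : Set (List Bool) :=
  {x | x.length = n - 1 ∧ (x.count true = n / 2 ∨ x.count true = n / 2 - 1)}

/-- VT weighted sum `Σ_{i=1}^n i·x_i` (positions indexed from 1). -/
def vtSum (x : List Bool) : ℕ :=
  (x.zipIdx.map (fun p => if p.1 then p.2 + 1 else 0)).sum

/-- The balanced Varshamov–Tenengolts code `BVT_a(n)`. -/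
def BVT (n a : ℕ) : Set (List Bool) :=
  {x | x ∈ balanced n ∧ vtSum x ≡ a [MOD n + 1]}

/-- `R_2^b(n,1,m)`: balanced words of length `n` all of whose runs have length at most `m`. -/
def R1 (n m : ℕ) : Set (List Bool) :=
  {x | x ∈ balanced n ∧ ∀ b : Bool, ¬ (List.replicate (m + 1) b <:+: x)}

/-!
Lower bound. Two distinct balanced words at Hamming distance at most 2 differ in exactly two
positions `i ≠ j`, and flipping `i` or flipping `j` in the first word gives two words in both
substitution balls. So in a code with `ν < 2` the substitution balls of the codewords, each with
`n + 1` words, are disjoint; they lie among the words of weight `n/2 - 1`, `n/2` or `n/2 + 1`,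
whence `|C| (n + 1) ≤ 3 C(n, n/2)`.

Upper bound. In the balanced Varshamov–Tenengolts code `BVT n a` no two words share a word of
their deletion, insertion or substitution balls: if two distinct words of length `n` have a
common word in their deletion (or insertion) balls, their VT sums differ by a nonzero amount of
absolute value at most `n`, and a substitution collision of two words of equal weight changes
the VT sum by `±(j - i)`. By pigeonhole over the `n + 1` residues some `BVT n a` has at least
`C(n, n/2) / (n + 1)` words.

Both bounds become `(3/2) log₂ n + O(1)` through
`C(n, n/2)² (n + 1) ≤ 4ⁿ ≤ C(n, n/2)² (2n + 1)`.
-/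

/-! ### Weight classes and VT sums -/

def weightSet (n w : ℕ) : Set (List Bool) := {x | x.length = n ∧ x.count true = w}

lemma weightSet_finite (n w : ℕ) : (weightSet n w).Finite :=
  (List.finite_length_eq Bool n).subset fun _ hx => hx.1

lemma weightSet_zero_right (n : ℕ) : weightSet n 0 = {List.replicate n false} := by
  ext x
  simp [weightSet, List.eq_replicate_iff, List.count_eq_zero]

lemma weightSet_zero_succ (w : ℕ) : weightSet 0 (w + 1) = ∅ := by
  ext x
  simp +contextual [weightSet]

lemma weightSet_succ_succ (n w : ℕ) :
    weightSet (n + 1) (w + 1) =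
      List.cons true '' weightSet n w ∪ List.cons false '' weightSet n (w + 1) := by
  ext (_ | ⟨_ | _, x⟩) <;> simp [weightSet]

lemma ncard_weightSet (n w : ℕ) : (weightSet n w).ncard = n.choose w := by
  induction n generalizing w with
  | zero => cases w <;> simp [weightSet_zero_right, weightSet_zero_succ]
  | succ n ih =>
    cases w with
    | zero => simp [weightSet_zero_right]
    | succ w =>
      have hdisj : Disjoint (List.cons true '' weightSet n w)
          (List.cons false '' weightSet n (w + 1)) :=
        Set.disjoint_left.2 (by rintro _ ⟨_, _, rfl⟩ ⟨_, _, h⟩; simp at h)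
      rw [weightSet_succ_succ, Set.ncard_union_eq hdisj ((weightSet_finite n w).image _)
        ((weightSet_finite n (w + 1)).image _), Set.ncard_image_of_injective _ List.cons_injective,
        Set.ncard_image_of_injective _ List.cons_injective, ih, ih, Nat.choose_succ_succ]

lemma sum_map_zipIdx_succ (x : List Bool) (k : ℕ) :
    ((x.zipIdx (k + 1)).map fun p => if p.1 then p.2 + 1 else 0).sum =
      ((x.zipIdx k).map fun p => if p.1 then p.2 + 1 else 0).sum + x.count true := by
  induction x generalizing k with
  | nil => rfl
  | cons a x ih => cases a <;> simp [List.zipIdx_cons, ih (k + 1)]; omega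

lemma vtSum_cons (b : Bool) (x : List Bool) :
    vtSum (b :: x) = (if b then 1 else 0) + vtSum x + x.count true := by
  cases b <;> simp [vtSum, List.zipIdx_cons, sum_map_zipIdx_succ x 0]; omega

lemma vtSum_append (u v : List Bool) :
    vtSum (u ++ v) = vtSum u + vtSum v + u.length * v.count true := by
  induction u with
  | nil => simp [vtSum]
  | cons b u ih =>
    rw [List.cons_append, vtSum_cons, vtSum_cons, ih, List.count_append, List.length_cons]
    ring

/-! ### Single substitutions -/

-- An index `i ≥ x.length` leaves `x` unchanged, so that `BS x` is the image of `Iic x.length`.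
def flipAt (x : List Bool) (i : ℕ) : List Bool := x.modify i not

@[simp]
lemma length_flipAt (x : List Bool) (i : ℕ) : (flipAt x i).length = x.length :=
  List.length_modify ..

@[simp]
lemma flipAt_flipAt_self (x : List Bool) (i : ℕ) : flipAt (flipAt x i) i = x := by
  rw [flipAt, flipAt, List.modify_modify_eq]
  convert List.modify_id i x
  funext b
  simp

lemma flipAt_comm (x : List Bool) (i j : ℕ) : flipAt (flipAt x i) j = flipAt (flipAt x j) i := by
  obtain rfl | hij := eq_or_ne i j
  · rfl
  · exact List.modify_modify_ne _ _ _ hij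

lemma flipAt_of_length_le {x : List Bool} {i : ℕ} (h : x.length ≤ i) : flipAt x i = x :=
  List.modify_eq_self h

lemma getElem_flipAt_of_ne {x : List Bool} {i j : ℕ} (hij : i ≠ j)
    (h : j < (flipAt x i).length) :
    (flipAt x i)[j] = x[j]'(by simpa using h) := by
  simp [flipAt, hij]

lemma flipAt_ne_flipAt {x : List Bool} {i j : ℕ} (hi : i < x.length) (hij : i ≠ j) :
    flipAt x i ≠ flipAt x j := by
  intro h
  have := congrArg (·[i]?) h
  simp [flipAt, hij.symm, hi] at this

lemma flipAt_injOn (x : List Bool) : Set.InjOn (flipAt x) (Set.Iic x.length) := by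
  intro i hi j hj h
  by_contra hij
  rcases (Set.mem_Iic.1 hi).lt_or_eq with hi | rfl
  · exact flipAt_ne_flipAt hi hij h
  · exact flipAt_ne_flipAt ((Set.mem_Iic.1 hj).lt_of_ne (Ne.symm hij)) (Ne.symm hij) h.symm

lemma flipAt_eq_take_append_cons {x : List Bool} {i : ℕ} (h : i < x.length) :
    flipAt x i = x.take i ++ (!x[i]) :: x.drop (i + 1) := by
  rw [flipAt, List.modify_eq_take_drop, List.drop_eq_getElem_cons h, List.modifyHead_cons]

lemma count_flipAt {x : List Bool} {i : ℕ} (h : i < x.length) :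
    ((flipAt x i).count true : ℤ) = x.count true + if x[i] then -1 else 1 := by
  have hx : x.count true = (x.take i ++ x[i] :: x.drop (i + 1)).count true := by
    rw [← List.drop_eq_getElem_cons h, List.take_append_drop]
  rw [hx, flipAt_eq_take_append_cons h]
  generalize x[i] = b
  cases b <;> simp <;> ring

lemma vtSum_flipAt {x : List Bool} {i : ℕ} (h : i < x.length) :
    (vtSum (flipAt x i) : ℤ) = vtSum x + (if x[i] then -1 else 1) * (i + 1) := by
  have hx : vtSum x = vtSum (x.take i ++ x[i] :: x.drop (i + 1)) := by
    rw [← List.drop_eq_getElem_cons h, List.take_append_drop]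
  have hi : (x.take i).length = i := List.length_take_of_le h.le
  rw [hx, flipAt_eq_take_append_cons h]
  generalize x[i] = b
  cases b <;> simp [vtSum_append, vtSum_cons, hi] <;> ring

lemma hammingDist_cons (a b : Bool) (x y : List Bool) :
    hammingDist (a :: x) (b :: y) = hammingDist x y + if a = b then 0 else 1 := by
  cases a <;> cases b <;> simp [hammingDist]

@[simp]
lemma hammingDist_self (x : List Bool) : hammingDist x x = 0 := by
  induction x with
  | nil => rfl
  | cons a x ih => simp [hammingDist_cons, ih]

lemma eq_of_hammingDist_eq_zero {x y : List Bool} (hl : y.length = x.length)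
    (h : hammingDist x y = 0) : y = x := by
  induction x generalizing y with
  | nil => simpa using hl
  | cons a x ih =>
    obtain _ | ⟨b, y⟩ := y
    · simp at hl
    · rw [hammingDist_cons] at h
      split_ifs at h with hab
      rw [hab, ih (by simpa using hl) h]

lemma hammingDist_flipAt_le (x : List Bool) (i : ℕ) : hammingDist x (flipAt x i) ≤ 1 := by
  induction x generalizing i with
  | nil => simp [flipAt]
  | cons a x ih =>
    cases i with
    | zero => simp [flipAt, hammingDist_cons]
    | succ i => simpa [flipAt, hammingDist_cons] using ih i

lemma exists_flipAt_of_hammingDist_le_one {x y : List Bool} (hl : y.length = x.length)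
    (h : hammingDist x y ≤ 1) : ∃ i ≤ x.length, y = flipAt x i := by
  induction x generalizing y with
  | nil => exact ⟨0, le_rfl, by simpa [flipAt] using hl⟩
  | cons a x ih =>
    obtain _ | ⟨b, y⟩ := y
    · simp at hl
    · rw [hammingDist_cons] at h
      split_ifs at h with hab
      · obtain ⟨i, hi, rfl⟩ := ih (by simpa using hl) (by simpa using h)
        exact ⟨i + 1, by simpa using hi, by simp [flipAt, hab]⟩
      · refine ⟨0, by simp, ?_⟩
        rw [eq_of_hammingDist_eq_zero (x := x) (y := y) (by simpa using hl) (by omega)]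
        cases a <;> cases b <;> simp_all [flipAt]

lemma BS_eq_image (x : List Bool) : BS x = flipAt x '' Set.Iic x.length := by
  ext y
  constructor
  · rintro ⟨hl, h⟩
    obtain ⟨i, hi, rfl⟩ := exists_flipAt_of_hammingDist_le_one hl h
    exact ⟨i, hi, rfl⟩
  · rintro ⟨i, -, rfl⟩
    exact ⟨length_flipAt x i, hammingDist_flipAt_le x i⟩

lemma flipAt_ne_of_count_eq {x y : List Bool} {j : ℕ} (hj : j < y.length)
    (hw : x.count true = y.count true) : flipAt y j ≠ x := by
  rintro rfl
  have := count_flipAt hj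
  split_ifs at this <;> omega

lemma exists_flipAt_of_mem_BS_inter {x y z : List Bool} (hl : x.length = y.length)
    (hw : x.count true = y.count true) (hne : x ≠ y) (hz : z ∈ BS x ∩ BS y) :
    ∃ i j, i < x.length ∧ j < x.length ∧ i ≠ j ∧ z = flipAt x i ∧ z = flipAt y j := by
  rw [BS_eq_image, BS_eq_image] at hz
  obtain ⟨⟨i, hi, rfl⟩, j, hj, hji⟩ := hz
  have hij : i ≠ j := by
    rintro rfl
    exact hne (by simpa using congrArg (flipAt · i) hji.symm)
  have hi' : i < x.length := by
    by_contra! h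
    rw [flipAt_of_length_le h] at hji
    exact flipAt_ne_of_count_eq (by grind) hw hji
  have hj' : j < x.length := by
    by_contra! h
    rw [flipAt_of_length_le (hl ▸ h)] at hji
    exact flipAt_ne_of_count_eq hi' hw.symm hji.symm
  exact ⟨i, j, hi', hj', hij, rfl, hji.symm⟩

lemma finite_BS (x : List Bool) : (BS x).Finite :=
  (List.finite_length_eq Bool x.length).subset fun _ hy => hy.1

lemma one_lt_ncard_BS_inter {x y : List Bool} (hl : x.length = y.length)
    (hw : x.count true = y.count true) (hne : x ≠ y) (h : (BS x ∩ BS y).Nonempty) :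
    1 < (BS x ∩ BS y).ncard := by
  obtain ⟨z, hz⟩ := h
  obtain ⟨i, j, hi, hj, hij, hzx, hzy⟩ := exists_flipAt_of_mem_BS_inter hl hw hne hz
  -- `x` and `y` differ exactly at `i` and `j`, so flipping `j` in `x` or `i` in `y` gives a
  -- second common neighbour
  have hxy : flipAt x j = flipAt y i := calc
    flipAt x j = flipAt (flipAt (flipAt x i) i) j := by rw [flipAt_flipAt_self]
    _ = flipAt (flipAt (flipAt x i) j) i := flipAt_comm ..
    _ = flipAt y i := by rw [← hzx, hzy, flipAt_flipAt_self]
  rw [Set.one_lt_ncard ((finite_BS x).inter_of_left _)]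
  refine ⟨z, hz, flipAt x j, ⟨?_, ?_⟩, hzx ▸ flipAt_ne_flipAt hi hij⟩
  · rw [BS_eq_image]; exact ⟨j, hj.le, rfl⟩
  · rw [hxy, BS_eq_image]; exact ⟨i, (hl ▸ hi).le, rfl⟩

/-! ### Balanced Varshamov–Tenengolts codes -/

lemma BS_inter_eq_empty_of_vtSum_modEq {n : ℕ} {x y : List Bool} (hx : x ∈ balanced n)
    (hy : y ∈ balanced n) (hv : vtSum x ≡ vtSum y [MOD n + 1]) (hne : x ≠ y) :
    BS x ∩ BS y = ∅ := by
  refine Set.eq_empty_iff_forall_notMem.2 fun z hz => ?_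
  have hl : x.length = y.length := hx.1.trans hy.1.symm
  obtain ⟨i, j, hi, hj, hij, hzx, hzy⟩ :=
    exists_flipAt_of_mem_BS_inter hl (hx.2.trans hy.2.symm) hne hz
  have hxy : x = flipAt (flipAt y j) i := by rw [← hzy, hzx, flipAt_flipAt_self]
  have hyi : (flipAt y j)[i]'(by simpa [← hl]) = y[i]'(hl ▸ hi) :=
    getElem_flipAt_of_ne hij.symm _
  have hcount := count_flipAt (x := flipAt y j) (i := i) (by simpa [← hl])
  have hvt := vtSum_flipAt (x := flipAt y j) (i := i) (by simpa [← hl])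
  rw [← hxy, hyi, count_flipAt (hl ▸ hj)] at hcount
  rw [← hxy, hyi, vtSum_flipAt (hl ▸ hj)] at hvt
  have hn : x.length = n := hx.1
  have hxw : x.count true = y.count true := hx.2.trans hy.2.symm
  have hdvd := Nat.modEq_iff_dvd.1 hv
  -- equal weights force `y[i] ≠ y[j]`, and then the VT sums differ by `± (j - i)`
  split_ifs at hcount hvt
  · omega
  · have := Int.eq_zero_of_abs_lt_dvd hdvd (by rw [abs_lt]; push_cast; omega)
    omega
  · have := Int.eq_zero_of_abs_lt_dvd hdvd (by rw [abs_lt]; push_cast; omega)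
    omega
  · omega

lemma cons_eq_append_singleton_of_forall_eq {w : List Bool} {a : Bool} (h : ∀ c ∈ w, c = a) :
    a :: w = w ++ [a] := by
  rw [List.eq_replicate_iff.2 ⟨rfl, h⟩, ← List.replicate_succ, List.replicate_succ']

lemma vtSum_sub_vtSum_of_shift (u w q : List Bool) (a b : Bool) :
    (vtSum (u ++ a :: (w ++ q)) : ℤ) - vtSum (u ++ (w ++ b :: q)) =
      (if a then (u.length + 1 : ℤ) else 0) + w.count true -
        if b then (u.length + w.length + 1 : ℤ) else 0 := by
  cases a <;> cases b <;> simp [vtSum_append, vtSum_cons] <;> ring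

-- Both words become `u ++ w ++ q` after one deletion; the conclusion says that they are equal.
lemma cons_eq_append_singleton_of_vtSum_modEq {n : ℕ} {u w q : List Bool} {a b : Bool}
    (hn : u.length + w.length + q.length + 1 = n)
    (h : vtSum (u ++ a :: (w ++ q)) ≡ vtSum (u ++ (w ++ b :: q)) [MOD n + 1]) :
    a :: w = w ++ [b] := by
  have hdiff := vtSum_sub_vtSum_of_shift u w q a b
  have hw := List.count_le_length (a := true) (l := w)
  have h0 := Int.eq_zero_of_abs_lt_dvd (dvd_sub_comm.1 (Nat.modEq_iff_dvd.1 h)) (by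
    rw [abs_lt]; split_ifs at hdiff <;> push_cast <;> omega)
  cases a <;> cases b <;> simp only [Bool.false_eq_true, if_true, if_false] at hdiff
  · refine cons_eq_append_singleton_of_forall_eq fun c hc => ?_
    have : w.count true = 0 := by omega
    cases c
    · rfl
    · exact absurd hc (List.count_eq_zero.1 this)
  · omega
  · omega
  · refine cons_eq_append_singleton_of_forall_eq fun c hc => ?_
    exact (List.count_eq_length.1 (by omega) c hc).symm

lemma BD_inter_eq_empty_of_vtSum_modEq {n : ℕ} {x y : List Bool} (hx : x.length = n)
    (hv : vtSum x ≡ vtSum y [MOD n + 1]) (hne : x ≠ y) : BD x ∩ BD y = ∅ := by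
  refine Set.eq_empty_iff_forall_notMem.2 ?_
  rintro z ⟨⟨u, v, a, rfl, rfl⟩, p, q, b, rfl, hz⟩
  rcases List.append_eq_append_iff.1 hz with ⟨w, rfl, rfl⟩ | ⟨w, rfl, rfl⟩
  · refine hne ?_
    have hn : u.length + w.length + q.length + 1 = n := by
      simp only [← hx, List.length_append, List.length_cons]; omega
    rw [List.append_assoc, ← List.cons_append,
      cons_eq_append_singleton_of_vtSum_modEq hn (by simpa using hv)]
    simp
  · refine hne ?_
    have hn : p.length + w.length + v.length + 1 = n := by
      simp only [← hx, List.length_append, List.length_cons]; omega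
    rw [List.append_assoc, ← List.cons_append,
      cons_eq_append_singleton_of_vtSum_modEq hn (by simpa using hv.symm)]
    simp

lemma BI_inter_eq_empty_of_vtSum_modEq {n : ℕ} {x y : List Bool} (hx : x.length = n)
    (hv : vtSum x ≡ vtSum y [MOD n + 1]) (hne : x ≠ y) : BI x ∩ BI y = ∅ := by
  refine Set.eq_empty_iff_forall_notMem.2 ?_
  rintro z ⟨⟨u, v, a, rfl, rfl⟩, p, q, b, rfl, hz⟩
  rcases List.append_eq_append_iff.1 hz with ⟨w, rfl, hw⟩ | ⟨w, rfl, hw⟩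
  · rcases List.cons_eq_append_iff.1 hw with ⟨rfl, h⟩ | ⟨w, rfl, rfl⟩
    · simp_all
    · refine hne ?_
      have hn : u.length + w.length + q.length + 1 = n := by
        simp only [← hx, List.length_append, List.length_cons]; omega
      rw [List.append_assoc, List.cons_append, ← List.cons_append,
        cons_eq_append_singleton_of_vtSum_modEq hn (by simpa using hv.symm)]
      simp
  · rcases List.cons_eq_append_iff.1 hw with ⟨rfl, h⟩ | ⟨w, rfl, rfl⟩
    · simp_all
    · refine hne ?_
      have hn : p.length + w.length + v.length + 1 = n := by
        simp only [← hx, List.length_append, List.length_cons]; omega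
      rw [List.append_assoc, List.cons_append, ← List.cons_append,
        cons_eq_append_singleton_of_vtSum_modEq hn (by simpa using hv)]
      simp

lemma length_of_mem_BD {x y : List Bool} (h : y ∈ BD x) : y.length + 1 = x.length := by
  obtain ⟨u, v, b, rfl, rfl⟩ := h
  simp only [List.length_append, List.length_cons]
  omega

lemma length_of_mem_BI {x y : List Bool} (h : y ∈ BI x) : y.length = x.length + 1 := by
  obtain ⟨u, v, b, rfl, rfl⟩ := h
  simp only [List.length_append, List.length_cons]
  omega

lemma finite_BSD (x : List Bool) : (BSD x).Finite :=
  (finite_BS x).union <| (List.finite_length_eq Bool (x.length - 1)).subset fun _ hy => by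
    have := length_of_mem_BD hy
    simp only [Set.mem_ofPred_eq]
    omega

lemma finite_BSI (x : List Bool) : (BSI x).Finite :=
  (finite_BS x).union <| (List.finite_length_eq Bool (x.length + 1)).subset fun _ hy =>
    length_of_mem_BI hy

lemma inter_eq_empty_of_mem_BVT {B : List Bool → Set (List Bool)} (hB : B = BSD ∨ B = BSI)
    {n a : ℕ} {x y : List Bool} (hx : x ∈ BVT n a) (hy : y ∈ BVT n a) (hne : x ≠ y) :
    B x ∩ B y = ∅ := by
  have hv : vtSum x ≡ vtSum y [MOD n + 1] := hx.2.trans hy.2.symm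
  have hS := Set.eq_empty_iff_forall_notMem.1 (BS_inter_eq_empty_of_vtSum_modEq hx.1 hy.1 hv hne)
  have hl : x.length = y.length := hx.1.1.trans hy.1.1.symm
  refine Set.eq_empty_iff_forall_notMem.2 fun z hz => ?_
  rcases hB with rfl | rfl
  · have hD := Set.eq_empty_iff_forall_notMem.1 (BD_inter_eq_empty_of_vtSum_modEq hx.1.1 hv hne)
    obtain ⟨hzx | hzx, hzy | hzy⟩ := hz
    · exact hS z ⟨hzx, hzy⟩
    · have := length_of_mem_BD hzy; have := hzx.1; omega
    · have := length_of_mem_BD hzx; have := hzy.1; omega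
    · exact hD z ⟨hzx, hzy⟩
  · have hI := Set.eq_empty_iff_forall_notMem.1 (BI_inter_eq_empty_of_vtSum_modEq hx.1.1 hv hne)
    obtain ⟨hzx | hzx, hzy | hzy⟩ := hz
    · exact hS z ⟨hzx, hzy⟩
    · have := length_of_mem_BI hzy; have := hzx.1; omega
    · have := length_of_mem_BI hzx; have := hzy.1; omega
    · exact hI z ⟨hzx, hzy⟩

lemma reconCode_BVT {B : List Bool → Set (List Bool)} (hB : B = BSD ∨ B = BSI) {N : ℕ}
    (hN : 1 ≤ N) (n a : ℕ) : reconCode n N B (BVT n a) :=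
  ⟨fun _ hx => hx.1, fun _ hx _ hy hne => by
    rw [inter_eq_empty_of_mem_BVT hB hx hy hne, Set.ncard_empty]
    omega⟩

lemma exists_choose_le_ncard_BVT_mul (n : ℕ) :
    ∃ a, n.choose (n / 2) ≤ (BVT n a).ncard * (n + 1) := by
  classical
  set s := (weightSet_finite n (n / 2)).toFinset
  let fiber (a : ℕ) := s.filter fun x => vtSum x % (n + 1) = a
  have hsum : ∑ a ∈ Finset.range (n + 1), n.choose (n / 2) ≤
      ∑ a ∈ Finset.range (n + 1), (fiber a).card * (n + 1) := by
    rw [← Finset.sum_mul, ← Finset.card_eq_sum_card_fiberwise fun x _ =>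
      Finset.mem_range.2 (Nat.mod_lt _ n.succ_pos)]
    simp [s, ← ncard_weightSet, Set.ncard_eq_toFinset_card _ (weightSet_finite n (n / 2)),
      mul_comm]
  obtain ⟨a, ha, hle⟩ := Finset.exists_le_of_sum_le (by simp) hsum
  refine ⟨a, hle.trans_eq ?_⟩
  congr 1
  rw [← Set.ncard_coe_finset]
  congr 1
  ext x
  simp [fiber, s, BVT, balanced, weightSet, Nat.ModEq, Nat.mod_eq_of_lt (Finset.mem_range.1 ha)]

/-! ### Sphere packing -/

lemma count_flipAt_mem_Icc (x : List Bool) (i : ℕ) :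
    (flipAt x i).count true ∈ Set.Icc (x.count true - 1) (x.count true + 1) := by
  rcases lt_or_ge i x.length with h | h
  · have := count_flipAt h
    split_ifs at this <;> constructor <;> omega
  · rw [flipAt_of_length_le h]
    constructor <;> omega

-- The balls `BS x`, of `n + 1` words each, lie in the weight classes `n/2 - 1`, `n/2`, `n/2 + 1`.
lemma ncard_mul_le_of_BS_inter_eq_empty {n : ℕ} {C : Set (List Bool)} (hC : C ⊆ balanced n)
    (hdisj : ∀ x ∈ C, ∀ y ∈ C, x ≠ y → BS x ∩ BS y = ∅) :
    C.ncard * (n + 1) ≤ 3 * n.choose (n / 2) := by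
  set T := weightSet n (n / 2 - 1) ∪ weightSet n (n / 2) ∪ weightSet n (n / 2 + 1)
  have hT : T.Finite := ((weightSet_finite _ _).union (weightSet_finite _ _)).union
    (weightSet_finite _ _)
  have hmaps : ∀ p ∈ C ×ˢ Set.Iic n, flipAt p.1 p.2 ∈ T := by
    rintro ⟨x, i⟩ ⟨hx, -⟩
    obtain ⟨hl, hw⟩ := hC hx
    have := count_flipAt_mem_Icc x i
    rw [hw] at this
    obtain ⟨h1, h2⟩ := this
    have : (flipAt x i).length = n := by rw [length_flipAt, hl]
    simp only [T, Set.mem_union, weightSet, Set.mem_ofPred_eq]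
    omega
  have hinj : Set.InjOn (fun p => flipAt p.1 p.2) (C ×ˢ Set.Iic n) := by
    rintro ⟨x, i⟩ ⟨hx, hi⟩ ⟨y, j⟩ ⟨hy, hj⟩ (h : flipAt x i = flipAt y j)
    obtain rfl : x = y := by
      by_contra hne
      have hxn : x.length = n := (hC hx).1
      have hyn : y.length = n := (hC hy).1
      refine (Set.eq_empty_iff_forall_notMem.1 (hdisj x hx y hy hne)) (flipAt x i) ⟨?_, ?_⟩
      · rw [BS_eq_image]; exact ⟨i, hxn ▸ hi, rfl⟩
      · rw [h, BS_eq_image]; exact ⟨j, hyn ▸ hj, rfl⟩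
    rw [flipAt_injOn x ((hC hx).1 ▸ hi) ((hC hx).1 ▸ hj) h]
  calc C.ncard * (n + 1) = (C ×ˢ Set.Iic n).ncard := by rw [Set.ncard_prod, Set.ncard_Iic_nat]
    _ ≤ T.ncard := Set.ncard_le_ncard_of_injOn _ hmaps hinj hT
    _ ≤ n.choose (n / 2 - 1) + n.choose (n / 2) + n.choose (n / 2 + 1) := by
      simp only [T, ← ncard_weightSet]
      exact (Set.ncard_union_le _ _).trans (add_le_add_left (Set.ncard_union_le _ _) _)
    _ ≤ 3 * n.choose (n / 2) := by
      have := Nat.choose_le_middle (n / 2 - 1) n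
      have := Nat.choose_le_middle (n / 2 + 1) n
      omega

lemma BS_inter_eq_empty_of_reconCode {B : List Bool → Set (List Bool)} (hB : B = BSD ∨ B = BSI)
    {n N : ℕ} {C : Set (List Bool)} (hN : N ≤ 2) (hC : reconCode n N B C) {x y : List Bool}
    (hx : x ∈ C) (hy : y ∈ C) (hne : x ≠ y) : BS x ∩ BS y = ∅ := by
  by_contra h
  have hsub : ∀ w, BS w ⊆ B w := by
    rcases hB with rfl | rfl <;> exact fun w => Set.subset_union_left
  have hfin : (B x).Finite := by rcases hB with rfl | rfl; exacts [finite_BSD x, finite_BSI x]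
  obtain ⟨hxl, hxw⟩ := hC.1 hx
  obtain ⟨hyl, hyw⟩ := hC.1 hy
  have := one_lt_ncard_BS_inter (hxl.trans hyl.symm) (hxw.trans hyw.symm) hne
    (Set.nonempty_iff_ne_empty.2 h)
  have := Set.ncard_le_ncard (Set.inter_subset_inter (hsub x) (hsub y)) (hfin.inter_of_left _)
  have := hC.2 x hx y hy hne
  omega

/-! ### Estimates -/

lemma centralBinom_sq_mul_le (k : ℕ) : k.centralBinom ^ 2 * (2 * k + 1) ≤ 16 ^ k := by
  induction k with
  | zero => simp
  | succ m ih =>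
    have hrec := Nat.succ_mul_centralBinom_succ m
    refine Nat.le_of_mul_le_mul_left ?_ (by positivity : 0 < (m + 1) ^ 2)
    calc (m + 1) ^ 2 * ((m + 1).centralBinom ^ 2 * (2 * (m + 1) + 1))
        = ((m + 1) * (m + 1).centralBinom) ^ 2 * (2 * m + 3) := by ring
      _ = 4 * m.centralBinom ^ 2 * ((2 * m + 1) * ((2 * m + 1) * (2 * m + 3))) := by
        rw [hrec]; ring
      _ ≤ 4 * m.centralBinom ^ 2 * ((2 * m + 1) * (4 * (m + 1) ^ 2)) :=
        Nat.mul_le_mul_left _ (Nat.mul_le_mul_left _ (by nlinarith))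
      _ = 16 * (m + 1) ^ 2 * (m.centralBinom ^ 2 * (2 * m + 1)) := by ring
      _ ≤ 16 * (m + 1) ^ 2 * 16 ^ m := by gcongr
      _ = (m + 1) ^ 2 * 16 ^ (m + 1) := by ring

lemma sixteen_pow_le_centralBinom_sq_mul (k : ℕ) :
    16 ^ k ≤ k.centralBinom ^ 2 * (4 * k + 1) := by
  induction k with
  | zero => simp
  | succ m ih =>
    have hrec := Nat.succ_mul_centralBinom_succ m
    refine Nat.le_of_mul_le_mul_left ?_ (by positivity : 0 < (m + 1) ^ 2)
    calc (m + 1) ^ 2 * 16 ^ (m + 1) = 16 * (m + 1) ^ 2 * 16 ^ m := by ring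
      _ ≤ 16 * (m + 1) ^ 2 * (m.centralBinom ^ 2 * (4 * m + 1)) := by gcongr
      _ = 4 * m.centralBinom ^ 2 * (4 * (m + 1) ^ 2 * (4 * m + 1)) := by ring
      _ ≤ 4 * m.centralBinom ^ 2 * ((2 * m + 1) ^ 2 * (4 * m + 5)) :=
        Nat.mul_le_mul_left _ (by nlinarith)
      _ = ((m + 1) * (m + 1).centralBinom) ^ 2 * (4 * m + 5) := by rw [hrec]; ring
      _ = (m + 1) ^ 2 * ((m + 1).centralBinom ^ 2 * (4 * (m + 1) + 1)) := by ring

lemma choose_half_sq_mul_le {n : ℕ} (hn : Even n) : n.choose (n / 2) ^ 2 * (n + 1) ≤ 4 ^ n := by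
  obtain ⟨k, rfl⟩ := hn
  rw [← two_mul, Nat.mul_div_cancel_left _ two_pos, pow_mul]
  exact centralBinom_sq_mul_le k

lemma four_pow_le_choose_half_sq_mul {n : ℕ} (hn : Even n) :
    4 ^ n ≤ n.choose (n / 2) ^ 2 * (2 * n + 1) := by
  obtain ⟨k, rfl⟩ := hn
  rw [← two_mul, Nat.mul_div_cancel_left _ two_pos, pow_mul, ← mul_assoc]
  exact sixteen_pow_le_centralBinom_sq_mul k

lemma logb_add_logb_le_of_mul_le {a b c d : ℝ} (ha : 0 < a) (hb : 0 < b) (hc : 0 < c)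
    (hd : 0 < d) (h : a * b ≤ c * d) :
    Real.logb 2 a + Real.logb 2 b ≤ Real.logb 2 c + Real.logb 2 d := by
  rw [← Real.logb_mul ha.ne' hb.ne', ← Real.logb_mul hc.ne' hd.ne']
  exact Real.logb_le_logb_of_le one_lt_two (by positivity) h

lemma logb_two_three_le : Real.logb 2 3 ≤ 2 := by
  rw [Real.logb_le_iff_le_rpow one_lt_two three_pos]
  norm_num

lemma three_halves_logb_sub_two_le {n c M : ℕ} (hn : 1 ≤ n) (hc : 1 ≤ c)
    (hcM : c * (n + 1) ≤ 3 * M) (hM : M ^ 2 * (n + 1) ≤ 4 ^ n) :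
    3 / 2 * Real.logb 2 n - 2 ≤ n - Real.logb 2 c := by
  have hM0 : 0 < M := by nlinarith
  have h1 := logb_add_logb_le_of_mul_le (a := c) (b := n + 1) (c := 3) (d := M)
    (by positivity) (by positivity) (by positivity) (by positivity) (by exact_mod_cast hcM)
  have h2 := logb_add_logb_le_of_mul_le (a := (M : ℝ) ^ 2) (b := n + 1) (c := 2 ^ n) (d := 2 ^ n)
    (by positivity) (by positivity) (by positivity) (by positivity)
    (by rw [← mul_pow]; exact_mod_cast hM)
  have h3 : Real.logb 2 n ≤ Real.logb 2 (n + 1) :=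
    Real.logb_le_logb_of_le one_lt_two (by positivity) (by linarith)
  simp only [Real.logb_pow, Real.logb_self_eq_one one_lt_two, Nat.cast_ofNat, mul_one] at h2
  linarith [logb_two_three_le]

lemma le_three_halves_logb_add_two {n c M : ℕ} (hn : 1 ≤ n) (hM0 : 0 < M)
    (hMc : M ≤ c * (n + 1)) (hM : 4 ^ n ≤ M ^ 2 * (2 * n + 1)) :
    n - Real.logb 2 c ≤ 3 / 2 * Real.logb 2 n + 2 := by
  have hc : 0 < c := by nlinarith
  have hn' : (1 : ℝ) ≤ n := by exact_mod_cast hn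
  have h1 := logb_add_logb_le_of_mul_le (a := M) (b := 1) (c := c) (d := n + 1)
    (by positivity) one_pos (by positivity) (by positivity) (by rw [mul_one]; exact_mod_cast hMc)
  have h2 := logb_add_logb_le_of_mul_le (a := 2 ^ n) (b := 2 ^ n) (c := (M : ℝ) ^ 2)
    (d := 2 * n + 1) (by positivity) (by positivity) (by positivity) (by positivity)
    (by rw [← mul_pow]; exact_mod_cast hM)
  have h3 := logb_add_logb_le_of_mul_le (a := n + 1) (b := 1) (c := 2) (d := n)
    (by positivity) one_pos two_pos (by positivity) (by linarith)
  have h4 := logb_add_logb_le_of_mul_le (a := 2 * n + 1) (b := 1) (c := 3) (d := n)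
    (by positivity) one_pos three_pos (by positivity) (by linarith)
  simp only [Real.logb_pow, Real.logb_self_eq_one one_lt_two, Real.logb_one, Nat.cast_ofNat,
    mul_one, add_zero] at h1 h2 h3 h4
  linarith [logb_two_three_le]

lemma le_rho {n N : ℕ} {B : List Bool → Set (List Bool)} {L : ℝ}
    (h : ∀ C, reconCode n N B C → L ≤ n - Real.logb 2 C.ncard) : L ≤ rho n N B :=
  le_csInf ⟨_, ∅, ⟨Set.empty_subset _, by simp⟩, rfl⟩ fun _ ⟨C, hC, hr⟩ =>
    hr ▸ h C hC

lemma rho_le {n N : ℕ} {B : List Bool → Set (List Bool)} {L : ℝ}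
    (h : ∀ C, reconCode n N B C → L ≤ n - Real.logb 2 C.ncard) {C : Set (List Bool)}
    (hC : reconCode n N B C) : rho n N B ≤ n - Real.logb 2 C.ncard :=
  csInf_le ⟨L, fun _ ⟨C, hC, hr⟩ => hr ▸ h C hC⟩ ⟨C, hC, rfl⟩

lemma three_halves_logb_sub_two_le_redundancy {B : List Bool → Set (List Bool)}
    (hB : B = BSD ∨ B = BSI) {n N : ℕ} (hn : Even n) (hn2 : 2 ≤ n) (hN : N ≤ 2)
    {C : Set (List Bool)} (hC : reconCode n N B C) :
    3 / 2 * Real.logb 2 n - 2 ≤ n - Real.logb 2 C.ncard := by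
  have hpack := ncard_mul_le_of_BS_inter_eq_empty hC.1
    fun _ hx _ hy => BS_inter_eq_empty_of_reconCode hB hN hC hx hy
  have hM := choose_half_sq_mul_le hn
  rcases Nat.eq_zero_or_pos C.ncard with h0 | hpos
  · -- `logb 2 0 = 0`: the empty code is as redundant as a code with one word
    have hmid := Nat.choose_le_middle 1 n
    rw [Nat.choose_one_right] at hmid
    simpa [h0] using three_halves_logb_sub_two_le (c := 1) (by omega) le_rfl (by omega) hM
  · exact three_halves_logb_sub_two_le (by omega) hpos hpack hM

/-- Theorem: for `B ∈ {B^SD, B^SI}` and `N ∈ {1,2}`, `ρ_b(n,N;B) = (3/2)·log₂ n + Θ(1)`. -/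
theorem stmt4 :
    ∀ B ∈ ({BSD, BSI} : Set (List Bool → Set (List Bool))),
      ∃ c1 c2 : ℝ, ∃ n0 : ℕ, Even n0 ∧ ∀ n : ℕ, Even n → n0 ≤ n →
        ∀ N : ℕ, N = 1 ∨ N = 2 →
          (3 / 2) * Real.logb 2 (n : ℝ) + c1 ≤ rho n N B ∧
          rho n N B ≤ (3 / 2) * Real.logb 2 (n : ℝ) + c2 := by
  intro B hB
  have hB : B = BSD ∨ B = BSI := hB
  refine ⟨-2, 2, 2, even_two, fun n hn hn2 N hN => ?_⟩
  have hlower :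
      ∀ C, reconCode n N B C → 3 / 2 * Real.logb 2 n + -2 ≤ n - Real.logb 2 C.ncard :=
    fun C hC => three_halves_logb_sub_two_le_redundancy hB hn hn2 (by omega) hC
  obtain ⟨a, ha⟩ := exists_choose_le_ncard_BVT_mul n
  refine ⟨le_rho hlower, (rho_le hlower (reconCode_BVT hB (by omega) n a)).trans ?_⟩
  exact le_three_halves_logb_add_two (by omega) (Nat.choose_pos (Nat.div_le_self n 2)) ha
    (four_pow_le_choose_half_sq_mul hn)

end BRC
end

section
/- Let n ≥ 4 be even and let A^D(n) denote the maximum size of a code C ⊆ U_n whose single-deletion balls are pairwise disjoint (i.e., |B^D(x) ∩ B^D(y)| = 0 for all distinct x, y ∈ C; equivalently, C is a balanced (n,1;B^D)-reconstruction code). Then A^D(n) ≤ 2·(C(n, n/2) − 2)/(n − 2). -/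
namespace BRC

/-!
Fractional packing. Give a word `y` of length `n - 1` with `r` runs the weight `1 / (2 ⌊r/2⌋)`
(and `1/2` if `y` is constant). Deleting a symbol never increases the number of runs, and a word
with `r` runs has `r` distinct single deletions, so the deletion ball of every codeword (which
contains both symbols) has total weight at least `1`. These balls are disjoint and lie in `V_{n-1}`,
so `|C|` is at most the total weight of `V_{n-1}`. For a word starting with `1`, `⌊r/2⌋` is its
number of descents `10`; there are `C(t,q) C(s-1,q-1)` words with `t` ones, `s` zeros and `q`
descents starting with `1`, and Vandermonde's identity sums their weights to
`(C(t+s,s) - 1) / (2s)`. Words starting with `0` are handled by complementation.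
-/

open Finset

theorem card_le_sum_of_pairwiseDisjoint {ι α : Type*} [DecidableEq α] {C : Finset ι}
    {S : Finset α} {B : ι → Finset α} {w : α → ℝ} (hB : (C : Set ι).PairwiseDisjoint B)
    (hBS : ∀ x ∈ C, B x ⊆ S) (hw : ∀ y ∈ S, 0 ≤ w y) (hBw : ∀ x ∈ C, 1 ≤ ∑ y ∈ B x, w y) :
    (#C : ℝ) ≤ ∑ y ∈ S, w y :=
  calc (#C : ℝ) = ∑ _x ∈ C, (1 : ℝ) := by simp
    _ ≤ ∑ x ∈ C, ∑ y ∈ B x, w y := sum_le_sum hBw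
    _ = ∑ y ∈ C.biUnion B, w y := (sum_biUnion hB).symm
    _ ≤ ∑ y ∈ S, w y :=
        sum_le_sum_of_subset_of_nonneg (biUnion_subset.2 hBS) fun y hy _ => hw y hy

def descents : List Bool → ℕ
  | a :: b :: t => (if a && !b then 1 else 0) + descents (b :: t)
  | _ => 0

def ascents (l : List Bool) : ℕ := descents (l.map (!·))

lemma descents_cons (a : Bool) (l : List Bool) :
    descents (a :: l) = (if a = true ∧ l.head? = some false then 1 else 0) + descents l := by
  rcases l with _ | ⟨b, l⟩ <;> cases a <;> try cases b
  all_goals simp [descents]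

lemma ascents_cons (a : Bool) (l : List Bool) :
    ascents (a :: l) = (if a = false ∧ l.head? = some true then 1 else 0) + ascents l := by
  rcases l with _ | ⟨b, l⟩ <;> cases a <;> try cases b
  all_goals simp [ascents, descents_cons]

lemma count_map_not (l : List Bool) (b : Bool) : (l.map (!·)).count b = l.count (!b) := by
  induction l with
  | nil => rfl
  | cons a l ih => cases a <;> cases b <;> simp_all

lemma descents_replicate (n : ℕ) (b : Bool) : descents (List.replicate n b) = 0 := by
  induction n with
  | zero => rfl
  | succ n ih => cases n <;> cases b <;> simp_all [List.replicate_succ, descents_cons]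

lemma descents_add_le_count_false (l : List Bool) :
    descents l + (if l.head? = some false then 1 else 0) ≤ l.count false := by
  induction l with
  | nil => simp [descents]
  | cons a l ih =>
    rw [descents_cons, List.count_cons]
    cases a <;> simp <;> split_ifs at ih ⊢ <;> simp_all <;> omega

lemma descents_append_le (u v : List Bool) (b : Bool) :
    descents (u ++ v) ≤ descents (u ++ b :: v) := by
  induction u with
  | nil => simp only [List.nil_append, descents_cons b v]; omega
  | cons c u ih =>
    rcases u with _ | ⟨d, u⟩
    · rcases v with _ | ⟨e, v⟩ <;> cases b <;> cases c <;> try cases e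
      all_goals simp [descents_cons]
    · simp only [List.cons_append] at ih ⊢
      rw [descents_cons c, descents_cons c]
      exact Nat.add_le_add_left ih _

lemma ascents_append_le (u v : List Bool) (b : Bool) :
    ascents (u ++ v) ≤ ascents (u ++ b :: v) := by
  simpa [ascents] using descents_append_le (u.map (!·)) (v.map (!·)) (!b)

lemma descents_add_getLast_eq (l : List Bool) :
    descents l + (if l.getLast? = some true then 1 else 0)
      = ascents l + (if l.head? = some true then 1 else 0) := by
  induction l with
  | nil => simp [descents, ascents]
  | cons a l ih =>
    rcases l with _ | ⟨b, l⟩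
    · cases a <;> simp [descents, ascents]
    · rw [List.getLast?_cons_cons, descents_cons, ascents_cons]
      simp only [List.head?_cons] at ih ⊢
      cases a <;> cases b <;> simp at ih ⊢ <;> omega

lemma one_le_ascents_add_descents {l : List Bool} (ht : true ∈ l) (hf : false ∈ l) :
    1 ≤ ascents l + descents l := by
  induction l with
  | nil => simp at ht
  | cons a l ih =>
    rw [ascents_cons, descents_cons]
    rcases l with _ | ⟨b, l⟩
    · cases a <;> simp at ht hf
    · by_cases hab : a = b
      · subst hab
        have := ih (by cases a <;> simp_all) (by cases a <;> simp_all)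
        omega
      · cases a <;> cases b <;> simp at hab ⊢ <;> omega

-- `⌊r/2⌋` for a word with `r ≥ 1` runs, which has `r - 1` ascents and descents in all.
def halfRuns (l : List Bool) : ℕ := (ascents l + descents l + 1) / 2

lemma halfRuns_of_head_true {l : List Bool} (h : l.head? = some true) :
    halfRuns l = descents l := by
  have := descents_add_getLast_eq l
  rw [if_pos h] at this
  unfold halfRuns
  split_ifs at this <;> omega

lemma halfRuns_map_not (l : List Bool) : halfRuns (l.map (!·)) = halfRuns l := by
  simp [halfRuns, ascents, Function.comp_def, add_comm]

lemma halfRuns_append_le (u v : List Bool) (b : Bool) :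
    halfRuns (u ++ v) ≤ halfRuns (u ++ b :: v) :=
  Nat.div_le_div_right (by
    have := ascents_append_le u v b
    have := descents_append_le u v b
    omega)

def deletionBall (x : List Bool) : Finset (List Bool) := (range x.length).image x.eraseIdx

lemma coe_deletionBall (x : List Bool) : (deletionBall x : Set (List Bool)) = BD x := by
  ext y
  simp only [deletionBall, coe_image, coe_range, Set.mem_image, Set.mem_Iio, BD, Set.mem_ofPred_eq]
  constructor
  · rintro ⟨i, hi, rfl⟩
    refine ⟨x.take i, x.drop (i + 1), x[i], ?_, List.eraseIdx_eq_take_drop_succ x i⟩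
    conv_lhs => rw [← List.take_append_drop i x, List.drop_eq_getElem_cons hi]
  · rintro ⟨u, v, b, rfl, rfl⟩
    exact ⟨u.length, by simp, by simp [List.eraseIdx_append_of_length_le]⟩

lemma deletionBall_cons (a : Bool) (l : List Bool) :
    deletionBall (a :: l) = insert l ((deletionBall l).image (a :: ·)) := by
  ext y
  simp only [deletionBall, mem_image, mem_range, mem_insert, List.length_cons]
  constructor
  · rintro ⟨_ | i, hi, rfl⟩
    · simp
    · exact .inr ⟨l.eraseIdx i, ⟨i, by omega, rfl⟩, rfl⟩
  · rintro (rfl | ⟨_, ⟨i, hi, rfl⟩, rfl⟩)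
    · exact ⟨0, by omega, rfl⟩
    · exact ⟨i + 1, by omega, rfl⟩

lemma ascents_add_descents_lt_card_deletionBall {x : List Bool} (hx : x ≠ []) :
    ascents x + descents x < #(deletionBall x) := by
  induction x with
  | nil => simp at hx
  | cons a l ih =>
    rcases l with _ | ⟨b, l⟩
    · simp [deletionBall, ascents, descents]
    have ih := ih (List.cons_ne_nil b l)
    have hcard : #(deletionBall (b :: l)) = #((deletionBall (b :: l)).image (a :: ·)) :=
      (card_image_of_injective _ List.cons_injective).symm
    rw [deletionBall_cons, ascents_cons, descents_cons]
    by_cases hab : a = b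
    · subst hab
      have := card_le_card (subset_insert (a :: l) ((deletionBall (a :: l)).image (a :: ·)))
      cases a <;> simp <;> omega
    · have hnotMem : b :: l ∉ (deletionBall (b :: l)).image (a :: ·) := by
        simp only [mem_image, List.cons.injEq, not_exists, not_and]
        exact fun _ _ h => absurd h hab
      rw [card_insert_of_notMem hnotMem]
      cases a <;> cases b <;> simp at hab ⊢ <;> omega

noncomputable def weight (y : List Bool) : ℝ := ((2 * max (halfRuns y) 1 : ℕ) : ℝ)⁻¹

lemma weight_nonneg (y : List Bool) : 0 ≤ weight y := by
  unfold weight; positivity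

lemma weight_le_weight_of_mem_deletionBall {x y : List Bool} (hy : y ∈ deletionBall x) :
    weight x ≤ weight y := by
  rw [← mem_coe, coe_deletionBall] at hy
  obtain ⟨u, v, b, rfl, rfl⟩ := hy
  unfold weight
  gcongr
  exact halfRuns_append_le u v b

lemma one_le_sum_weight_deletionBall {x : List Bool} (ht : true ∈ x) (hf : false ∈ x) :
    1 ≤ ∑ y ∈ deletionBall x, weight y := by
  have hrun := one_le_ascents_add_descents ht hf
  have hcard := ascents_add_descents_lt_card_deletionBall (List.ne_nil_of_mem ht)
  have hle : 2 * max (halfRuns x) 1 ≤ #(deletionBall x) := by unfold halfRuns; omega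
  calc (1 : ℝ) = ((2 * max (halfRuns x) 1 : ℕ) : ℝ) * weight x := by
        unfold weight; field_simp
    _ ≤ #(deletionBall x) * weight x := by gcongr; exact weight_nonneg x
    _ = ∑ _y ∈ deletionBall x, weight x := by rw [sum_const, nsmul_eq_mul]
    _ ≤ ∑ y ∈ deletionBall x, weight y :=
        sum_le_sum fun _ hy => weight_le_weight_of_mem_deletionBall hy

noncomputable def words (n : ℕ) : Finset (List Bool) := (List.finite_length_eq Bool n).toFinset

@[simp]
lemma mem_words {n : ℕ} {y : List Bool} : y ∈ words n ↔ y.length = n := by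
  simp [words]

noncomputable def headClass (b : Bool) (t s : ℕ) : Finset (List Bool) :=
  (words (t + s)).filter fun y => y.count true = t ∧ y.head? = some b

noncomputable def descentClass (b : Bool) (t s q : ℕ) : Finset (List Bool) :=
  (headClass b t s).filter fun y => descents y = q

lemma mem_headClass {b : Bool} {t s : ℕ} {y : List Bool} :
    y ∈ headClass b t s ↔ y.count true = t ∧ y.count false = s ∧ y.head? = some b := by
  have := List.count_true_add_count_false y
  simp only [headClass, mem_filter, mem_words]
  constructor
  · rintro ⟨hl, ht, hh⟩
    exact ⟨ht, by omega, hh⟩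
  · rintro ⟨ht, hs, hh⟩
    exact ⟨by omega, ht, hh⟩

lemma mem_descentClass {b : Bool} {t s q : ℕ} {y : List Bool} :
    y ∈ descentClass b t s q ↔
      y.count true = t ∧ y.count false = s ∧ y.head? = some b ∧ descents y = q := by
  simp [descentClass, mem_headClass, and_assoc]

lemma descentClass_true_succ (t s q : ℕ) :
    descentClass true (t + 1) (s + 1) (q + 1) =
      (descentClass true t (s + 1) (q + 1) ∪ descentClass false t (s + 1) q).image (true :: ·) := by
  ext y
  simp only [mem_image, mem_union, mem_descentClass]
  constructor
  · rintro ⟨ht, hs, hh, hq⟩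
    rcases y with _ | ⟨a, z⟩
    · simp at hh
    obtain rfl : a = true := by simpa using hh
    rcases z with _ | ⟨c, z⟩
    · simp at hs
    refine ⟨c :: z, ?_, rfl⟩
    cases c <;> simp_all [descents_cons]
    omega
  · rintro ⟨z, hz, rfl⟩
    rcases z with _ | ⟨c, z⟩
    · simp at hz
    cases c <;> simp_all [descents_cons]
    omega

lemma descentClass_false_succ (t s q : ℕ) :
    descentClass false t (s + 2) q =
      (descentClass false t (s + 1) q ∪ descentClass true t (s + 1) q).image (false :: ·) := by
  ext y
  simp only [mem_image, mem_union, mem_descentClass]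
  constructor
  · rintro ⟨ht, hs, hh, hq⟩
    rcases y with _ | ⟨a, z⟩
    · simp at hh
    obtain rfl : a = false := by simpa using hh
    rcases z with _ | ⟨c, z⟩
    · simp at hs
    refine ⟨c :: z, ?_, rfl⟩
    cases c <;> simp_all [descents_cons]
  · rintro ⟨z, hz, rfl⟩
    rcases z with _ | ⟨c, z⟩
    · simp at hz
    cases c <;> simp_all [descents_cons]

lemma descentClass_true_zero_left (s q : ℕ) : descentClass true 0 s q = ∅ := by
  refine eq_empty_of_forall_notMem fun y hy => ?_
  obtain ⟨ht, -, hh, -⟩ := mem_descentClass.1 hy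
  exact List.count_eq_zero.1 ht (List.mem_of_head? hh)

lemma descentClass_true_zero_right (t s : ℕ) : descentClass true t (s + 1) 0 = ∅ := by
  refine eq_empty_of_forall_notMem fun y hy => ?_
  obtain ⟨-, hs, hh, hq⟩ := mem_descentClass.1 hy
  have hrun := one_le_ascents_add_descents (List.mem_of_head? hh) (List.count_pos_iff.1 (by omega))
  have := halfRuns_of_head_true hh
  unfold halfRuns at this
  omega

lemma descentClass_false_one (t q : ℕ) :
    descentClass false t 1 q = if q = 0 then {false :: List.replicate t true} else ∅ := by
  ext y
  rw [mem_descentClass]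
  constructor
  · rintro ⟨ht, hs, hh, rfl⟩
    obtain ⟨z, rfl⟩ : ∃ z, y = false :: z := ⟨y.tail, by cases y <;> simp_all⟩
    have hz : z = List.replicate t true := by
      have := List.count_true_add_count_false z
      refine List.eq_replicate_iff.2 ⟨by simp_all, fun b hb => ?_⟩
      cases b
      · simp_all [List.count_eq_zero]
      · rfl
    subst hz
    simp [descents_cons, descents_replicate]
  · split_ifs with hq
    · rw [mem_singleton]
      rintro rfl
      simp [hq, descents_cons, descents_replicate, List.count_replicate]
    · simp

lemma disjoint_descentClass_true_false (t s q t' s' q' : ℕ) :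
    Disjoint (descentClass true t s q) (descentClass false t' s' q') :=
  disjoint_left.2 fun _ h h' => by
    simp only [mem_descentClass] at h h'
    simp_all

lemma card_descentClass_true_of_false {s : ℕ}
    (hF : ∀ t q, #(descentClass false t (s + 1) q) = t.choose q * s.choose q) (t q : ℕ) :
    #(descentClass true t (s + 1) (q + 1)) = t.choose (q + 1) * s.choose q := by
  induction t generalizing q with
  | zero => simp [descentClass_true_zero_left]
  | succ t ih =>
    rw [descentClass_true_succ, card_image_of_injective _ List.cons_injective,
      card_union_of_disjoint (disjoint_descentClass_true_false ..), ih, hF, Nat.choose_succ_succ]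
    ring

lemma card_descentClass_false (t s q : ℕ) :
    #(descentClass false t (s + 1) q) = t.choose q * s.choose q := by
  induction s generalizing t q with
  | zero => rw [descentClass_false_one]; rcases q with _ | q <;> simp
  | succ s ih =>
    rw [descentClass_false_succ, card_image_of_injective _ List.cons_injective,
      card_union_of_disjoint (disjoint_descentClass_true_false ..).symm, ih]
    rcases q with _ | q
    · simp [descentClass_true_zero_right]
    · rw [card_descentClass_true_of_false ih, Nat.choose_succ_succ' s]
      ring

lemma card_descentClass_true (t s q : ℕ) :
    #(descentClass true t (s + 1) (q + 1)) = t.choose (q + 1) * s.choose q :=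
  card_descentClass_true_of_false (fun t q => card_descentClass_false t s q) t q

theorem sum_range_choose_mul_choose (t s : ℕ) :
    ∑ q ∈ range (s + 1), t.choose q * s.choose q = (t + s).choose s := by
  rw [Nat.add_choose_eq, Nat.sum_antidiagonal_eq_sum_range_succ_mk]
  refine sum_congr rfl fun q hq => ?_
  rw [Nat.choose_symm (mem_range_succ_iff.1 hq)]

lemma sum_weight_descentClass_true (t s q : ℕ) :
    ∑ y ∈ descentClass true t (s + 1) (q + 1), weight y
      = t.choose (q + 1) * (s + 1).choose (q + 1) / (2 * (s + 1) : ℝ) := by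
  have hw : ∀ y ∈ descentClass true t (s + 1) (q + 1), weight y = ((2 * (q + 1) : ℕ) : ℝ)⁻¹ := by
    intro y hy
    obtain ⟨-, -, hh, hq⟩ := mem_descentClass.1 hy
    rw [weight, halfRuns_of_head_true hh, hq, max_eq_left (by omega)]
  have hchoose : ((s + 1 : ℕ) : ℝ) * s.choose q = (s + 1).choose (q + 1) * (q + 1 : ℕ) := by
    exact_mod_cast Nat.add_one_mul_choose_eq s q
  rw [sum_congr rfl hw, sum_const, card_descentClass_true, nsmul_eq_mul]
  field_simp
  push_cast at hchoose ⊢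
  linear_combination (2 * (t.choose (q + 1) : ℝ)) * hchoose

lemma sum_weight_headClass_true (t s : ℕ) :
    ∑ y ∈ headClass true t (s + 1), weight y
      = ((t + (s + 1)).choose (s + 1) - 1 : ℝ) / (2 * (s + 1)) := by
  have hmaps : ∀ y ∈ headClass true t (s + 1), descents y ∈ range (s + 2) := fun y hy => by
    have := descents_add_le_count_false y
    rw [mem_headClass] at hy
    rw [mem_range]
    split_ifs at this <;> omega
  have hvandermonde : ∑ q ∈ range (s + 1), (t.choose (q + 1) * (s + 1).choose (q + 1) : ℝ)
      = (t + (s + 1)).choose (s + 1) - 1 := by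
    have := sum_range_choose_mul_choose t (s + 1)
    rw [sum_range_succ', Nat.choose_zero_right, Nat.choose_zero_right] at this
    rw [eq_sub_iff_add_eq]
    exact_mod_cast this
  rw [← sum_fiberwise_of_maps_to hmaps, sum_range_succ']
  calc _ = ∑ q ∈ range (s + 1), t.choose (q + 1) * (s + 1).choose (q + 1) / (2 * (s + 1) : ℝ)
        + ∑ y ∈ descentClass true t (s + 1) 0, weight y :=
        congrArg₂ _ (sum_congr rfl fun q _ => sum_weight_descentClass_true t s q) rfl
    _ = _ := by rw [descentClass_true_zero_right, sum_empty, add_zero, ← sum_div, hvandermonde]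

lemma sum_weight_headClass_false (t s : ℕ) :
    ∑ y ∈ headClass false t s, weight y = ∑ y ∈ headClass true s t, weight y := by
  refine sum_nbij' (List.map (!·)) (List.map (!·)) ?_ ?_ ?_ ?_ ?_
  · simp +contextual [mem_headClass, count_map_not]
  · simp +contextual [mem_headClass, count_map_not]
  all_goals simp [weight, halfRuns_map_not, Function.comp_def]

lemma filter_words_count_true_eq (t s : ℕ) (hts : 1 ≤ t + s) :
    (words (t + s)).filter (·.count true = t) = headClass true t s ∪ headClass false t s := by
  ext (_ | ⟨b, y⟩)
  · simp [headClass]; omega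
  · cases b <;> simp [headClass]

lemma sum_weight_filter_count_true {n t : ℕ} (ht : 1 ≤ t) (htn : t < n) :
    ∑ y ∈ (words n).filter (·.count true = t), weight y
      = (n.choose t - 1 : ℝ) / (2 * (n - t : ℕ)) + (n.choose t - 1 : ℝ) / (2 * t) := by
  obtain ⟨s, rfl⟩ : ∃ s, n = t + (s + 1) := ⟨n - t - 1, by omega⟩
  obtain ⟨t, rfl⟩ : ∃ t', t = t' + 1 := ⟨t - 1, by omega⟩
  have hdisj : Disjoint (headClass true (t + 1) (s + 1)) (headClass false (t + 1) (s + 1)) :=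
    disjoint_left.2 fun _ h h' => by simp_all [mem_headClass]
  rw [filter_words_count_true_eq _ _ (by omega), sum_union hdisj, sum_weight_headClass_true,
    sum_weight_headClass_false, sum_weight_headClass_true, add_comm (s + 1),
    ← Nat.choose_symm_add (a := t + 1), show t + 1 + (s + 1) - (t + 1) = s + 1 by omega]
  push_cast
  ring

lemma sum_weight_filter_count_le {n : ℕ} (hn : Even n) (h4 : 4 ≤ n) :
    ∑ y ∈ (words (n - 1)).filter (fun y => y.count true = n / 2 ∨ y.count true = n / 2 - 1),
      weight y ≤ 2 * ((n.choose (n / 2) : ℝ) - 2) / (n - 2) := by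
  obtain ⟨m, rfl⟩ : ∃ m, n = 2 * m + 4 := ⟨n / 2 - 2, by rcases hn with ⟨k, rfl⟩; omega⟩
  have hdisj : Disjoint ((words (2 * m + 3)).filter (·.count true = m + 2))
      ((words (2 * m + 3)).filter (·.count true = m + 1)) :=
    disjoint_filter.2 fun _ _ h h' => by omega
  have hsymm : (2 * m + 3).choose (m + 2) = (2 * m + 3).choose (m + 1) :=
    Nat.choose_symm_half (m + 1)
  have hcentral : (2 * m + 4).choose (m + 2) = 2 * (2 * m + 3).choose (m + 1) := by
    rw [Nat.choose_succ_succ' (2 * m + 3), hsymm]; ring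
  simp only [show (2 * m + 4) / 2 = m + 2 by omega, show 2 * m + 4 - 1 = 2 * m + 3 by omega,
    show m + 2 - 1 = m + 1 by omega]
  rw [filter_or, sum_union hdisj, sum_weight_filter_count_true (by omega) (by omega),
    sum_weight_filter_count_true (by omega) (by omega), hsymm, hcentral,
    show 2 * m + 3 - (m + 2) = m + 1 by omega, show 2 * m + 3 - (m + 1) = m + 2 by omega]
  have hH : (1 : ℝ) ≤ (2 * m + 3).choose (m + 1) := Nat.one_le_cast.2 (Nat.choose_pos (by omega))
  push_cast
  generalize ((2 * m + 3).choose (m + 1) : ℝ) = H at hH ⊢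
  have hle : (H - 1) / (2 * (m + 2)) ≤ (H - 1) / (2 * (m + 1)) :=
    div_le_div_of_nonneg_left (by linarith) (by positivity) (by linarith)
  have hrhs : 2 * (2 * H - 2) / (2 * m + 4 - 2) = 4 * ((H - 1) / (2 * (m + 1))) := by
    rw [show (2 * m + 4 - 2 : ℝ) = 2 * (m + 1) by ring]
    field_simp
    ring
  rw [hrhs]
  linarith

lemma true_mem_and_false_mem_of_mem_balanced {n : ℕ} {x : List Bool} (hx : x ∈ balanced n)
    (hn : 2 ≤ n) : true ∈ x ∧ false ∈ x := by
  obtain ⟨hlen, hcount⟩ := hx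
  have := List.count_true_add_count_false x
  exact ⟨List.count_pos_iff.1 (by omega), List.count_pos_iff.1 (by omega)⟩

lemma BD_subset_Vset {n : ℕ} {x : List Bool} (hx : x ∈ balanced n) : BD x ⊆ Vset n := by
  rintro _ ⟨u, v, b, rfl, rfl⟩
  obtain ⟨hlen, hcount⟩ := hx
  simp only [List.length_append, List.length_cons, List.count_append, List.count_cons]
    at hlen hcount
  refine ⟨by simp; omega, ?_⟩
  cases b <;> simp at hcount ⊢ <;> omega

/-- Theorem: upper bound on the maximum size `A^D(n)` of a balanced
`(n,1;B^D)`-reconstruction code (single-deletion balls pairwise disjoint). -/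
theorem stmt8 (n : ℕ) (hn : Even n) (h4 : 4 ≤ n) (C : Set (List Bool))
    (hC : C ⊆ balanced n)
    (hdisj : ∀ x ∈ C, ∀ y ∈ C, x ≠ y → BD x ∩ BD y = ∅) :
    (C.ncard : ℝ) ≤ 2 * (((n.choose (n / 2) : ℕ) : ℝ) - 2) / ((n : ℝ) - 2) := by
  have hfin : C.Finite := (List.finite_length_eq Bool n).subset fun x hx => (hC hx).1
  rw [Set.ncard_eq_toFinset_card C hfin]
  refine (card_le_sum_of_pairwiseDisjoint (B := deletionBall) ?_ ?_ (fun y _ => weight_nonneg y)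
    ?_).trans (sum_weight_filter_count_le hn h4)
  · intro x hx y hy hxy
    rw [Function.onFun, ← disjoint_coe, coe_deletionBall, coe_deletionBall,
      Set.disjoint_iff_inter_eq_empty]
    exact hdisj x (by simpa using hx) y (by simpa using hy) hxy
  · intro x hx y hy
    rw [← mem_coe, coe_deletionBall] at hy
    simpa [Vset] using BD_subset_Vset (hC (by simpa using hx)) hy
  · intro x hx
    obtain ⟨ht, hf⟩ := true_mem_and_false_mem_of_mem_balanced (hC (by simpa using hx)) (by omega)
    exact one_le_sum_weight_deletionBall ht hf

end BRC
end

section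
/- Let n ≥ 2 be even and let x, y be distinct words in U_n. Then |B^D(x) ∩ B^D(y)| = |B^I(x) ∩ B^I(y)|. -/
/-!
Stripping a common first or last letter from `x` and `y` changes neither intersection size,
so by induction on the length one may assume `x = a x' = x'' a'` and `y = b y' = y'' b'` with
`a ≠ b` and `a' ≠ b'`. A common deletion must then remove the first letter of one word and the
last letter of the other: it is `x'` when `x' = y''` and `y'` when `y' = x''`. Likewise a common
insertion is `a y = x b'` when `x' = y''` and `b x = y a'` when `y' = x''`. The two insertions
differ in their first letter, and the two deletions differ because `x' = y'` would make `x`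
and `y` differ only in their first letter, contradicting their equal weight.
-/

namespace BRC

theorem _root_.Set.insert_inter_insert_of_mem_imp {α : Type*} {p q : α} {A B : Set α}
    (hpq : p ≠ q) (hp : p ∈ B → p ∈ A) (hq : q ∈ A → q ∈ B) :
    insert p A ∩ insert q B = A ∩ B := by
  ext z
  simp only [Set.mem_inter_iff, Set.mem_insert_iff]
  constructor
  · rintro ⟨rfl | hzA, rfl | hzB⟩
    exacts [absurd rfl hpq, ⟨hp hzB, hzB⟩, ⟨hzA, hq hzA⟩, ⟨hzA, hzB⟩]
  · rintro ⟨hzA, hzB⟩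
    exact ⟨Or.inr hzA, Or.inr hzB⟩

theorem _root_.Set.ncard_setOf_and_eq_or_and_eq_congr {α β : Type*} {P Q : Prop}
    {p q : α} {p' q' : β} (hpq : p ≠ q) (hpq' : p' ≠ q') :
    {z | P ∧ z = p ∨ Q ∧ z = q}.ncard = {z | P ∧ z = p' ∨ Q ∧ z = q'}.ncard := by
  by_cases hP : P <;> by_cases hQ : Q <;>
    simp [hP, hQ, Set.ofPred_or, Set.ncard_pair hpq.symm, Set.ncard_pair hpq'.symm]

variable {x y z t : List Bool} {e : Bool}

theorem mem_BD_cons_self : t ∈ BD (e :: t) :=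
  ⟨[], t, e, rfl, rfl⟩

theorem BD_cons : BD (e :: t) = insert t ((e :: ·) '' BD t) := by
  ext z
  constructor
  · rintro ⟨_ | ⟨c, u⟩, v, b, hx, rfl⟩
    · exact Or.inl (List.cons.inj hx).2.symm
    · obtain ⟨rfl, rfl⟩ := List.cons_eq_cons.mp hx
      exact Or.inr ⟨u ++ v, ⟨u, v, b, rfl, rfl⟩, rfl⟩
  · rintro (rfl | ⟨w, ⟨u, v, b, rfl, rfl⟩, rfl⟩)
    · exact mem_BD_cons_self
    · exact ⟨e :: u, v, b, rfl, rfl⟩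

theorem BI_cons : BI (e :: t) = insert ((!e) :: e :: t) ((e :: ·) '' BI t) := by
  ext z
  constructor
  · rintro ⟨_ | ⟨c, u⟩, v, b, hx, rfl⟩
    · subst hx
      by_cases hb : b = e
      · exact Or.inr ⟨e :: t, ⟨[], t, e, rfl, rfl⟩, by simp [hb]⟩
      · exact Or.inl (by simp [Bool.eq_not_of_ne hb])
    · obtain ⟨rfl, rfl⟩ := List.cons_eq_cons.mp hx
      exact Or.inr ⟨u ++ b :: v, ⟨u, v, b, rfl, rfl⟩, rfl⟩
  · rintro (rfl | ⟨w, ⟨u, v, b, rfl, rfl⟩, rfl⟩)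
    · exact ⟨[], e :: t, !e, rfl, rfl⟩
    · exact ⟨e :: u, v, b, rfl, rfl⟩

theorem BD_reverse : BD t.reverse = List.reverse '' BD t := by
  ext z
  constructor
  · rintro ⟨u, v, b, ht, rfl⟩
    refine ⟨v.reverse ++ u.reverse, ⟨v.reverse, u.reverse, b, ?_, rfl⟩, by simp⟩
    simpa using congrArg List.reverse ht
  · rintro ⟨w, ⟨u, v, b, rfl, rfl⟩, rfl⟩
    exact ⟨v.reverse, u.reverse, b, by simp, by simp⟩

theorem BI_reverse : BI t.reverse = List.reverse '' BI t := by
  ext z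
  constructor
  · rintro ⟨u, v, b, ht, rfl⟩
    refine ⟨v.reverse ++ b :: u.reverse, ⟨v.reverse, u.reverse, b, ?_, rfl⟩, by simp⟩
    simpa using congrArg List.reverse ht
  · rintro ⟨w, ⟨u, v, b, rfl, rfl⟩, rfl⟩
    exact ⟨v.reverse, u.reverse, b, by simp, by simp⟩

theorem eq_or_head?_of_mem_BD_cons (hz : z ∈ BD (e :: t)) : z = t ∨ z.head? = some e := by
  rw [BD_cons] at hz
  obtain rfl | ⟨w, -, rfl⟩ := hz
  exacts [Or.inl rfl, Or.inr rfl]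

theorem eq_or_head?_of_mem_BI_cons (hz : z ∈ BI (e :: t)) :
    z = (!e) :: e :: t ∨ z.head? = some e := by
  rw [BI_cons] at hz
  obtain rfl | ⟨w, -, rfl⟩ := hz
  exacts [Or.inl rfl, Or.inr rfl]

theorem reverse_mem_BD_reverse : z.reverse ∈ BD t.reverse ↔ z ∈ BD t := by
  rw [BD_reverse]
  exact List.reverse_injective.mem_set_image

theorem reverse_mem_BI_reverse : z.reverse ∈ BI t.reverse ↔ z ∈ BI t := by
  rw [BI_reverse]
  exact List.reverse_injective.mem_set_image

theorem BD_cons_inter_BD_cons (hxy : x ≠ y) :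
    BD (e :: x) ∩ BD (e :: y) = (e :: ·) '' (BD x ∩ BD y) := by
  rw [BD_cons, BD_cons, Set.image_inter List.cons_injective]
  refine Set.insert_inter_insert_of_mem_imp hxy ?_ ?_ <;>
    exact fun ⟨w, _, hw⟩ => ⟨w, hw ▸ mem_BD_cons_self, hw⟩

theorem BI_cons_inter_BI_cons (hxy : x ≠ y) :
    BI (e :: x) ∩ BI (e :: y) = (e :: ·) '' (BI x ∩ BI y) := by
  rw [BI_cons, BI_cons, Set.image_inter List.cons_injective]
  refine Set.insert_inter_insert_of_mem_imp (by simpa using hxy) ?_ ?_ <;>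
    rintro ⟨w, -, hw⟩ <;> simp at hw

theorem ncard_BD_cons_inter_BD_cons (hxy : x ≠ y) :
    (BD (e :: x) ∩ BD (e :: y)).ncard = (BD x ∩ BD y).ncard := by
  rw [BD_cons_inter_BD_cons hxy, Set.ncard_image_of_injective _ List.cons_injective]

theorem ncard_BI_cons_inter_BI_cons (hxy : x ≠ y) :
    (BI (e :: x) ∩ BI (e :: y)).ncard = (BI x ∩ BI y).ncard := by
  rw [BI_cons_inter_BI_cons hxy, Set.ncard_image_of_injective _ List.cons_injective]

theorem ncard_BD_reverse_inter_BD_reverse :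
    (BD x.reverse ∩ BD y.reverse).ncard = (BD x ∩ BD y).ncard := by
  rw [BD_reverse, BD_reverse, ← Set.image_inter List.reverse_injective,
    Set.ncard_image_of_injective _ List.reverse_injective]

theorem ncard_BI_reverse_inter_BI_reverse :
    (BI x.reverse ∩ BI y.reverse).ncard = (BI x ∩ BI y).ncard := by
  rw [BI_reverse, BI_reverse, ← Set.image_inter List.reverse_injective,
    Set.ncard_image_of_injective _ List.reverse_injective]

theorem ncard_BD_concat_inter_BD_concat (hxy : x ≠ y) :
    (BD (x ++ [e]) ∩ BD (y ++ [e])).ncard = (BD x ∩ BD y).ncard := by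
  rw [← ncard_BD_reverse_inter_BD_reverse, List.reverse_concat, List.reverse_concat,
    ncard_BD_cons_inter_BD_cons (mt List.reverse_inj.mp hxy), ncard_BD_reverse_inter_BD_reverse]

theorem ncard_BI_concat_inter_BI_concat (hxy : x ≠ y) :
    (BI (x ++ [e]) ∩ BI (y ++ [e])).ncard = (BI x ∩ BI y).ncard := by
  rw [← ncard_BI_reverse_inter_BI_reverse, List.reverse_concat, List.reverse_concat,
    ncard_BI_cons_inter_BI_cons (mt List.reverse_inj.mp hxy), ncard_BI_reverse_inter_BI_reverse]

section HeadAndLastDiffer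

variable {a b : Bool} {s : List Bool}

theorem eq_of_cons_eq_append_singleton_of_head? (h : a :: s = s ++ [e]) (hs : s.head? = some b) :
    a = b := by
  simpa [List.head?_append, hs] using congrArg List.head? h

theorem eq_or_eq_of_mem_BD_cons_inter (hz : z ∈ BD (a :: s) ∩ BD (b :: t)) (hab : a ≠ b) :
    z = s ∨ z = t := by
  rcases eq_or_head?_of_mem_BD_cons hz.1 with h | ha
  · exact Or.inl h
  rcases eq_or_head?_of_mem_BD_cons hz.2 with h | hb
  · exact Or.inr h
  exact absurd (Option.some_injective _ (ha.symm.trans hb)) hab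

theorem eq_or_eq_of_mem_BI_cons_inter (hz : z ∈ BI (a :: s) ∩ BI (b :: t)) (hab : a ≠ b) :
    z = b :: a :: s ∨ z = a :: b :: t := by
  rcases eq_or_head?_of_mem_BI_cons hz.1 with h | ha
  · exact Or.inl (by rwa [← Bool.eq_not_of_ne hab.symm] at h)
  rcases eq_or_head?_of_mem_BI_cons hz.2 with h | hb
  · exact Or.inr (by rwa [← Bool.eq_not_of_ne hab] at h)
  exact absurd (Option.some_injective _ (ha.symm.trans hb)) hab

theorem eq_or_eq_of_mem_BD_concat_inter (hz : z ∈ BD (s ++ [a]) ∩ BD (t ++ [b]))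
    (hab : a ≠ b) :
    z = s ∨ z = t := by
  have hz' : z.reverse ∈ BD (a :: s.reverse) ∩ BD (b :: t.reverse) := by
    simp only [← List.reverse_concat, Set.mem_inter_iff, reverse_mem_BD_reverse]
    exact hz
  simpa using eq_or_eq_of_mem_BD_cons_inter hz' hab

theorem eq_or_eq_of_mem_BI_concat_inter (hz : z ∈ BI (s ++ [a]) ∩ BI (t ++ [b]))
    (hab : a ≠ b) :
    z = s ++ [a, b] ∨ z = t ++ [b, a] := by
  have hz' : z.reverse ∈ BI (a :: s.reverse) ∩ BI (b :: t.reverse) := by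
    simp only [← List.reverse_concat, Set.mem_inter_iff, reverse_mem_BI_reverse]
    exact hz
  rcases eq_or_eq_of_mem_BI_cons_inter hz' hab with h | h
  · exact Or.inl (by simpa using congrArg List.reverse h)
  · exact Or.inr (by simpa using congrArg List.reverse h)

variable {a' b' : Bool} {xt yt xi yi : List Bool}

theorem BD_inter_BD_of_head_ne_of_getLast_ne (hx : a :: xt = xi ++ [a'])
    (hy : b :: yt = yi ++ [b']) (hab : a ≠ b) (hab' : a' ≠ b') :
    BD (a :: xt) ∩ BD (b :: yt) = {z | xt = yi ∧ z = xt ∨ yt = xi ∧ z = yt} := by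
  ext z
  constructor
  · intro hz
    have hlast : z = xi ∨ z = yi := eq_or_eq_of_mem_BD_concat_inter (hx ▸ hy ▸ hz) hab'
    rcases eq_or_eq_of_mem_BD_cons_inter hz hab with rfl | rfl <;> rcases hlast with h | rfl
    · rcases eq_or_head?_of_mem_BD_cons hz.2 with rfl | hb
      · exact Or.inr ⟨h, rfl⟩
      · exact absurd (eq_of_cons_eq_append_singleton_of_head? (by rwa [← h] at hx) hb) hab
    · exact Or.inl ⟨rfl, rfl⟩
    · exact Or.inr ⟨h, rfl⟩
    · rcases eq_or_head?_of_mem_BD_cons hz.1 with rfl | ha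
      · exact Or.inl ⟨rfl, rfl⟩
      · exact absurd (eq_of_cons_eq_append_singleton_of_head? hy ha).symm hab
  · rintro (⟨rfl, rfl⟩ | ⟨rfl, rfl⟩)
    · exact ⟨mem_BD_cons_self, hy ▸ ⟨z, [], b', rfl, by simp⟩⟩
    · exact ⟨hx ▸ ⟨z, [], a', rfl, by simp⟩, mem_BD_cons_self⟩

theorem BI_inter_BI_of_head_ne_of_getLast_ne (hx : a :: xt = xi ++ [a'])
    (hy : b :: yt = yi ++ [b']) (hab : a ≠ b) (hab' : a' ≠ b') :
    BI (a :: xt) ∩ BI (b :: yt) =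
      {w | xt = yi ∧ w = a :: b :: yt ∨ yt = xi ∧ w = b :: a :: xt} := by
  ext w
  constructor
  · intro hw
    have hlast := eq_or_eq_of_mem_BI_concat_inter (hx ▸ hy ▸ hw) hab'
    have hxa : xi ++ [a', b'] = a :: (xt ++ [b']) := by
      rw [show [a', b'] = [a'] ++ [b'] from rfl, ← List.append_assoc, ← hx, List.cons_append]
    have hyb : yi ++ [b', a'] = b :: (yt ++ [a']) := by
      rw [show [b', a'] = [b'] ++ [a'] from rfl, ← List.append_assoc, ← hy, List.cons_append]
    rw [hxa, hyb] at hlast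
    rcases eq_or_eq_of_mem_BI_cons_inter hw hab with rfl | rfl <;> rcases hlast with h | h
    · exact absurd (List.cons.inj h).1.symm hab
    · exact Or.inr ⟨List.append_inj_left' ((List.cons.inj h).2.symm.trans hx) rfl, rfl⟩
    · exact Or.inl ⟨List.append_inj_left' ((List.cons.inj h).2.symm.trans hy) rfl, rfl⟩
    · exact absurd (List.cons.inj h).1 hab
  · rintro (⟨rfl, rfl⟩ | ⟨rfl, rfl⟩)
    · exact ⟨⟨a :: xt, [], b', by simp, by simp [← hy]⟩, ⟨[], b :: yt, a, rfl, rfl⟩⟩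
    · exact ⟨⟨[], a :: xt, b, rfl, rfl⟩, ⟨b :: yt, [], a', by simp, by simp [← hx]⟩⟩

theorem ncard_BD_inter_eq_ncard_BI_inter_of_head_ne_of_getLast_ne (hx : a :: xt = xi ++ [a'])
    (hy : b :: yt = yi ++ [b']) (hab : a ≠ b) (hab' : a' ≠ b')
    (hcount : (a :: xt).count true = (b :: yt).count true) :
    (BD (a :: xt) ∩ BD (b :: yt)).ncard = (BI (a :: xt) ∩ BI (b :: yt)).ncard := by
  rw [BD_inter_BD_of_head_ne_of_getLast_ne hx hy hab hab',
    BI_inter_BI_of_head_ne_of_getLast_ne hx hy hab hab']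
  refine Set.ncard_setOf_and_eq_or_and_eq_congr ?_ (by simp [hab])
  rintro rfl
  cases a <;> cases b <;> simp at hcount hab

end HeadAndLastDiffer

theorem ncard_BD_inter_eq_ncard_BI_inter (hlen : x.length = y.length)
    (hcount : x.count true = y.count true) (hxy : x ≠ y) :
    (BD x ∩ BD y).ncard = (BI x ∩ BI y).ncard := by
  induction hn : x.length using Nat.strong_induction_on generalizing x y with
  | _ n ih =>
  rcases x with _ | ⟨a, xt⟩ <;> rcases y with _ | ⟨b, yt⟩
  · exact absurd rfl hxy
  · simp at hlen
  · simp at hlen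
  by_cases hab : a = b
  · subst hab
    have hxy' : xt ≠ yt := fun h => hxy (h ▸ rfl)
    rw [ncard_BD_cons_inter_BD_cons hxy', ncard_BI_cons_inter_BI_cons hxy']
    exact ih xt.length (by simp [← hn]) (by simpa using hlen)
      (by simpa [List.count_cons] using hcount) hxy' rfl
  obtain ⟨xi, a', hx⟩ := (a :: xt).eq_nil_or_concat'.resolve_left (List.cons_ne_nil _ _)
  obtain ⟨yi, b', hy⟩ := (b :: yt).eq_nil_or_concat'.resolve_left (List.cons_ne_nil _ _)
  by_cases hab' : a' = b'
  · subst hab'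
    rw [hx, hy] at hlen hcount hxy ⊢
    rw [hx] at hn
    have hxy' : xi ≠ yi := fun h => hxy (h ▸ rfl)
    rw [ncard_BD_concat_inter_BD_concat hxy', ncard_BI_concat_inter_BI_concat hxy']
    exact ih xi.length (by simp [← hn]) (by simpa using hlen) (by simpa using hcount) hxy' rfl
  exact ncard_BD_inter_eq_ncard_BI_inter_of_head_ne_of_getLast_ne hx hy hab hab' hcount

theorem stmt13_general (n : ℕ)
    (x y : List Bool) (hx : x ∈ balanced n) (hy : y ∈ balanced n) (hxy : x ≠ y) :
    (BD x ∩ BD y).ncard = (BI x ∩ BI y).ncard :=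
  ncard_BD_inter_eq_ncard_BI_inter (hx.1.trans hy.1.symm) (hx.2.trans hy.2.symm) hxy

/-- Proposition: for distinct balanced words, the deletion and insertion balls
have intersections of equal size. -/
theorem stmt13 (n : ℕ) (hn : Even n) (h2 : 2 ≤ n)
    (x y : List Bool) (hx : x ∈ balanced n) (hy : y ∈ balanced n) (hxy : x ≠ y) :
    (BD x ∩ BD y).ncard = (BI x ∩ BI y).ncard :=
  stmt13_general n x y hx hy hxy

end BRC
end

section
/- Let n ≥ 2 be even and let m be a positive integer with m ≤ n. Then |R_2^b(n,1,m)| ≥ C(n, n/2)·(1 − n·(1/2)^m). In particular, if m = ⌈log2 n⌉ + 1 (and m ≤ n), then |R_2^b(n,1,⌈log2 n⌉ + 1)| ≥ C(n, n/2)/2. -/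
namespace BRC

/-!
A balanced word of length `n = 2t` with a run of `m + 1` equal letters is determined by the
position of that run (fewer than `n` choices) and the word of length `n - m - 1` left after deleting
it, which has `t - m - 1` ones or `t - m - 1` zeros. As `C(a + 1, b + 1) = (a + 1) / (b + 1) * C(a, b)`
at least doubles `C(a, b)` when `2 * b < a`, we get `2 ^ (m + 1) * C(n - m - 1, t - m - 1) ≤ C(n, t)`,
so at most `n * 2 ^ (-m) * C(n, t)` balanced words have a run longer than `m`.
-/

def wordsWithCount : ℕ → ℕ → Finset (List Bool)
  | 0, 0 => {[]}
  | 0, _ + 1 => ∅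
  | L + 1, 0 => (wordsWithCount L 0).image (false :: ·)
  | L + 1, k + 1 =>
      (wordsWithCount L k).image (true :: ·) ∪ (wordsWithCount L (k + 1)).image (false :: ·)

theorem mem_wordsWithCount {L k : ℕ} {x : List Bool} :
    x ∈ wordsWithCount L k ↔ x.length = L ∧ x.count true = k := by
  induction L generalizing k x with
  | zero => cases k <;> cases x <;> simp [wordsWithCount]
  | succ L ih =>
    rcases k with _ | k <;> rcases x with _ | ⟨_ | _, x⟩ <;>
      simp [wordsWithCount, ih]

theorem card_wordsWithCount (L k : ℕ) : (wordsWithCount L k).card = L.choose k := by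
  induction L generalizing k with
  | zero => cases k <;> rfl
  | succ L ih =>
    cases k with
    | zero => simp [wordsWithCount, Finset.card_image_of_injective _ List.cons_injective, ih]
    | succ k =>
      rw [wordsWithCount, Finset.card_union_of_disjoint (by simp [Finset.disjoint_left]),
        Finset.card_image_of_injective _ List.cons_injective,
        Finset.card_image_of_injective _ List.cons_injective, ih, ih, Nat.choose_succ_succ]

/-- A word containing `p` is recovered from the position of an occurrence of `p` and the word
left after deleting that occurrence. -/
theorem card_filter_isInfix_le (p : List Bool) (L k : ℕ) :
    ((wordsWithCount L k).filter (p <:+: ·)).card ≤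
      (L - p.length + 1) * (L - p.length).choose (k - p.count true) := by
  have hsub : (wordsWithCount L k).filter (p <:+: ·) ⊆
      (Finset.range (L - p.length + 1) ×ˢ wordsWithCount (L - p.length) (k - p.count true)).image
        (fun iy => iy.2.take iy.1 ++ p ++ iy.2.drop iy.1) := by
    intro x hx
    obtain ⟨hxw, s, u, rfl⟩ := Finset.mem_filter.mp hx
    obtain ⟨hlen, hcount⟩ := mem_wordsWithCount.mp hxw
    simp only [List.length_append, List.count_append] at hlen hcount
    refine Finset.mem_image.mpr ⟨(s.length, s ++ u), ?_, by simp⟩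
    simp only [Finset.mem_product, Finset.mem_range, mem_wordsWithCount, List.length_append,
      List.count_append]
    omega
  calc _ ≤ _ := Finset.card_le_card hsub
    _ ≤ _ := Finset.card_image_le
    _ = _ := by rw [Finset.card_product, Finset.card_range, card_wordsWithCount]

theorem two_pow_mul_choose_le {a b j : ℕ} (h : 2 * b + j ≤ a) :
    2 ^ j * a.choose b ≤ (a + j).choose (b + j) := by
  induction j with
  | zero => simp
  | succ j ih =>
    have hstep : 2 * (a + j).choose (b + j) ≤ (a + j + 1).choose (b + j + 1) := by
      have := Nat.add_one_mul_choose_eq (a + j) (b + j)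
      refine Nat.le_of_mul_le_mul_right ?_ (Nat.succ_pos (b + j))
      calc 2 * (a + j).choose (b + j) * (b + j + 1)
          = 2 * (b + j + 1) * (a + j).choose (b + j) := by ring
        _ ≤ (a + j + 1) * (a + j).choose (b + j) := Nat.mul_le_mul_right _ (by omega)
        _ = _ := this
    calc 2 ^ (j + 1) * a.choose b = 2 * (2 ^ j * a.choose b) := by ring
      _ ≤ 2 * (a + j).choose (b + j) := Nat.mul_le_mul_left 2 (ih (by omega))
      _ ≤ _ := hstep

theorem two_pow_mul_card_filter_hasLongRun_le (t m : ℕ) :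
    2 ^ m * ((wordsWithCount (2 * t) t).filter
      (fun x => ∃ b, List.replicate (m + 1) b <:+: x)).card ≤ 2 * t * (2 * t).choose t := by
  rcases Nat.lt_or_ge t (m + 1) with hshort | hlong
  · -- a run of `m + 1 > t` equal letters cannot fit into a word with `t` ones and `t` zeros
    have hempty : (wordsWithCount (2 * t) t).filter
        (fun x => ∃ b, List.replicate (m + 1) b <:+: x) = ∅ := by
      refine Finset.filter_eq_empty_iff.mpr fun x hx ⟨b, hb⟩ => ?_
      obtain ⟨hlen, hcount⟩ := mem_wordsWithCount.mp hx
      have hle := hb.sublist.count_le b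
      rw [List.count_replicate_self] at hle
      have := List.count_true_add_count_false x
      cases b <;> omega
    rw [hempty, Finset.card_empty]
    exact Nat.zero_le _
  · set a := 2 * t - (m + 1)
    have hrun : ∀ b, ((wordsWithCount (2 * t) t).filter
        (List.replicate (m + 1) b <:+: ·)).card ≤ (a + 1) * a.choose (t - (m + 1)) := by
      intro b
      refine (card_filter_isInfix_le _ _ _).trans (le_of_eq ?_)
      cases b
      · simpa [a, List.count_replicate] using
          Nat.choose_symm_of_eq_add (n := a) (a := t) (b := t - (m + 1)) (by omega)
      · simp [a]
    have hchoose := two_pow_mul_choose_le (a := a) (b := t - (m + 1)) (j := m + 1) (by omega)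
    rw [show a + (m + 1) = 2 * t by omega, show t - (m + 1) + (m + 1) = t by omega] at hchoose
    calc 2 ^ m * ((wordsWithCount (2 * t) t).filter
          (fun x => ∃ b, List.replicate (m + 1) b <:+: x)).card
        ≤ 2 ^ m * (2 * ((a + 1) * a.choose (t - (m + 1)))) := by
          simp only [Bool.exists_bool, Finset.filter_or]
          gcongr
          exact (Finset.card_union_le _ _).trans (by linarith [hrun true, hrun false])
      _ = (a + 1) * (2 ^ (m + 1) * a.choose (t - (m + 1))) := by ring
      _ ≤ 2 * t * (2 * t).choose t := by gcongr; omega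

theorem R1_eq_filter (n m : ℕ) :
    R1 n m = ↑((wordsWithCount n (n / 2)).filter
      (fun x => ∀ b, ¬ List.replicate (m + 1) b <:+: x)) := by
  ext x
  simp [R1, balanced, mem_wordsWithCount]

theorem choose_mul_le_ncard_R1 {n : ℕ} (hn : Even n) (m : ℕ) :
    (n.choose (n / 2) : ℝ) * (1 - n * (1 / 2) ^ m) ≤ (R1 n m).ncard := by
  obtain ⟨t, rfl⟩ := hn
  rw [← two_mul] at *
  have hsplit := Finset.card_filter_add_card_filter_not (s := wordsWithCount (2 * t) t)
    (fun x => ∃ b, List.replicate (m + 1) b <:+: x)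
  simp only [not_exists, card_wordsWithCount] at hsplit
  set bad := (wordsWithCount (2 * t) t).filter (fun x => ∃ b, List.replicate (m + 1) b <:+: x)
  have hbad : (bad.card : ℝ) ≤ (2 * t : ℕ) * (2 * t).choose t * (1 / 2) ^ m :=
    calc (bad.card : ℝ) = (1 / 2) ^ m * (2 ^ m * bad.card) := by
          rw [← mul_assoc, ← mul_pow]; norm_num
      _ ≤ (1 / 2) ^ m * ((2 * t : ℕ) * (2 * t).choose t) := by
          have := two_pow_mul_card_filter_hasLongRun_le t m
          gcongr ?_ * ?_
          exact_mod_cast this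
      _ = _ := by ring
  have hsplitR : (bad.card : ℝ) + ((wordsWithCount (2 * t) t).filter
      (fun x => ∀ b, ¬ List.replicate (m + 1) b <:+: x)).card = (2 * t).choose t := by
    exact_mod_cast hsplit
  rw [R1_eq_filter, Set.ncard_coe_finset, Nat.mul_div_cancel_left t two_pos]
  linarith

theorem stmt19_general (n : ℕ) (hn : Even n) :
    (∀ m : ℕ, 1 ≤ m → m ≤ n →
      ((n.choose (n / 2) : ℕ) : ℝ) * (1 - (n : ℝ) * (1 / 2) ^ m) ≤
        ((R1 n m).ncard : ℝ)) ∧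
    (Nat.clog 2 n + 1 ≤ n →
      ((n.choose (n / 2) : ℕ) : ℝ) / 2 ≤ ((R1 n (Nat.clog 2 n + 1)).ncard : ℝ)) := by
  refine ⟨fun m _ _ => choose_mul_le_ncard_R1 hn m, fun _ => ?_⟩
  have hpow : (n : ℝ) * (1 / 2) ^ Nat.clog 2 n ≤ 1 := by
    rw [one_div_pow, mul_one_div, div_le_one (by positivity)]
    exact_mod_cast Nat.le_pow_clog one_lt_two n
  calc ((n.choose (n / 2) : ℕ) : ℝ) / 2 = (n.choose (n / 2) : ℝ) * (1 - 1 / 2) := by ring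
    _ ≤ (n.choose (n / 2) : ℝ) * (1 - n * (1 / 2) ^ (Nat.clog 2 n + 1)) := by
      gcongr
      rw [pow_succ, ← mul_assoc]
      linarith
    _ ≤ _ := choose_mul_le_ncard_R1 hn _

/-- Lemma: lower bound on the size of `R_2^b(n,1,m)`. -/
theorem stmt19 (n : ℕ) (hn : Even n) (h2 : 2 ≤ n) :
    (∀ m : ℕ, 1 ≤ m → m ≤ n →
      ((n.choose (n / 2) : ℕ) : ℝ) * (1 - (n : ℝ) * (1 / 2) ^ m) ≤
        ((R1 n m).ncard : ℝ)) ∧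
    (Nat.clog 2 n + 1 ≤ n →
      ((n.choose (n / 2) : ℕ) : ℝ) / 2 ≤ ((R1 n (Nat.clog 2 n + 1)).ncard : ℝ)) :=
  stmt19_general n hn

end BRC
end
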